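/- arXiv:1110.3200 — 3 statements merged into one kernel-verified Lean document; each statement's English description precedes it below -/
import Mathlib

section
/- Let G be a linearly ordered abelian group, H ⊆ G a convex subgroup, m, n ∈ ℕ with m ∣ n, and a ∈ G. Then a ∈ H + mG if and only if (n/m)·a ∈ H + nG. -/
open Pointwise

/-- The set `nG = {n·g : g ∈ G}`. -/
def NG (G : Type*) [AddCommGroup G] (n : ℕ) : Set G :=
  {x : G | ∃ g : G, n • g = x}

/-- `H` is a convex subgroup of the linearly ordered abelian group `G`. -/
def IsConvexSubgroup {G : Type*} [AddCommGroup G] [LinearOrder G] [IsOrderedAddMonoid G] (H : Set G) : Prop :=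
  (0 : G) ∈ H ∧ (∀ x ∈ H, ∀ y ∈ H, x + y ∈ H) ∧ (∀ x ∈ H, -x ∈ H) ∧
    ∀ a ∈ H, ∀ b : G, 0 ≤ b → b ≤ a → b ∈ H

theorem mem_add_NG_iff {G : Type*} [AddCommGroup G] {H : Set G} {m : ℕ} {a : G} :
    a ∈ H + NG G m ↔ ∃ g : G, a - m • g ∈ H := by
  constructor
  · rintro ⟨h, hh, _, ⟨g, rfl⟩, rfl⟩
    exact ⟨g, by rwa [add_sub_cancel_right]⟩
  · rintro ⟨g, hg⟩
    exact ⟨a - m • g, hg, m • g, ⟨g, rfl⟩, sub_add_cancel a (m • g)⟩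

namespace IsConvexSubgroup

variable {G : Type*} [AddCommGroup G] [LinearOrder G] [IsOrderedAddMonoid G] {H : Set G}

theorem abs_mem_iff (hH : IsConvexSubgroup H) {x : G} : |x| ∈ H ↔ x ∈ H := by
  rcases abs_choice x with h | h <;> rw [h]
  exact ⟨fun hx => neg_neg x ▸ hH.2.2.1 _ hx, hH.2.2.1 x⟩

theorem nsmul_mem (hH : IsConvexSubgroup H) (k : ℕ) {x : G} (hx : x ∈ H) : k • x ∈ H := by
  induction k with
  | zero => simpa using hH.1
  | succ k ih => simpa only [succ_nsmul] using hH.2.1 _ ih _ hx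

theorem mem_of_nsmul_mem (hH : IsConvexSubgroup H) {k : ℕ} (hk : k ≠ 0) {x : G}
    (hx : k • x ∈ H) : x ∈ H := by
  have habs : k • |x| ∈ H := by rwa [← abs_nsmul, hH.abs_mem_iff]
  have hle : |x| ≤ k • |x| := by
    simpa using nsmul_le_nsmul_left (abs_nonneg x) (Nat.one_le_iff_ne_zero.2 hk)
  exact hH.abs_mem_iff.1 (hH.2.2.2 _ habs _ (abs_nonneg x) hle)

theorem nsmul_mem_iff (hH : IsConvexSubgroup H) {k : ℕ} (hk : k ≠ 0) {x : G} :
    k • x ∈ H ↔ x ∈ H :=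
  ⟨hH.mem_of_nsmul_mem hk, hH.nsmul_mem k⟩

end IsConvexSubgroup

theorem mem_add_iff_div_smul_mem_general {G : Type*} [AddCommGroup G] [LinearOrder G] [IsOrderedAddMonoid G]
    (H : Set G) (hH : IsConvexSubgroup H) (m n : ℕ) (hn : 0 < n)
    (hmn : m ∣ n) (a : G) :
    a ∈ H + NG G m ↔ (n / m) • a ∈ H + NG G n := by
  obtain ⟨k, rfl⟩ := hmn
  have hk : k ≠ 0 := by rintro rfl; simp at hn
  have hm : 0 < m := Nat.pos_of_ne_zero (by rintro rfl; simp at hn)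
  rw [Nat.mul_div_cancel_left k hm, mem_add_NG_iff, mem_add_NG_iff]
  refine exists_congr fun g => ?_
  rw [mul_nsmul, ← nsmul_sub, hH.nsmul_mem_iff hk]

/-- For a convex subgroup `H`, positive naturals `m ∣ n`, and `a ∈ G`:
`a ∈ H + mG ↔ (n/m)·a ∈ H + nG`. -/
theorem mem_add_iff_div_smul_mem {G : Type*} [AddCommGroup G] [LinearOrder G] [IsOrderedAddMonoid G]
    (H : Set G) (hH : IsConvexSubgroup H) (m n : ℕ) (hm : 0 < m) (hn : 0 < n)
    (hmn : m ∣ n) (a : G) :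
    a ∈ H + NG G m ↔ (n / m) • a ∈ H + NG G n :=
  mem_add_iff_div_smul_mem_general H hH m n hn hmn a
end

section
/- Let G be a linearly ordered abelian group, C ⊆ G a convex subgroup, and m, n ∈ ℕ. Then G^{[n]}_C + mG = G^{[n]}_C + gcd(m,n)G. -/
open Pointwise

/-- `H_{n,a}`: the largest convex subgroup `H` with `a ∉ H + nG` (it is the union of
all such subgroups), and `{0}` if `a ∈ nG` (in which case the union is empty). -/
def Hna {G : Type*} [AddCommGroup G] [LinearOrder G] [IsOrderedAddMonoid G] (n : ℕ) (a : G) : Set G :=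
  {0} ∪ ⋃₀ {H : Set G | IsConvexSubgroup H ∧ a ∉ H + NG G n}

/-- `H'_{n,b} = ⋃ {H_{n,a} : a ∈ G, b ∉ H_{n,a}}`, with `{0}` for the empty union. -/
def Hnb' {G : Type*} [AddCommGroup G] [LinearOrder G] [IsOrderedAddMonoid G] (n : ℕ) (b : G) : Set G :=
  {0} ∪ ⋃₀ {H : Set G | ∃ a : G, H = Hna n a ∧ b ∉ Hna n a}

/-- `G^{[n]}_C = ⋂ {H + nG : H convex subgroup, H ⊋ C}`, with `G` for the empty
intersection. -/
def Gbr {G : Type*} [AddCommGroup G] [LinearOrder G] [IsOrderedAddMonoid G] (C : Set G) (n : ℕ) : Set G :=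
  ⋂₀ {S : Set G | ∃ H : Set G, IsConvexSubgroup H ∧ C ⊂ H ∧ S = H + NG G n}

/-
Since `nG + nG ⊆ nG`, each `H + nG`, hence also `G^{[n]}_C`, is stable under adding `nG`.
Bézout writes `gcd(m,n)·g` as `m·(a g) + n·(b g)`, and the `n`-part is absorbed into `G^{[n]}_C`.
-/

lemma NG_subset_NG_of_dvd {G : Type*} [AddCommGroup G] {d m : ℕ} (h : d ∣ m) :
    NG G m ⊆ NG G d := by
  obtain ⟨k, rfl⟩ := h
  rintro _ ⟨g, rfl⟩
  exact ⟨k • g, by rw [smul_smul]⟩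

lemma NG_add_NG_subset {G : Type*} [AddCommGroup G] (n : ℕ) :
    NG G n + NG G n ⊆ NG G n := by
  rintro _ ⟨_, ⟨g, rfl⟩, _, ⟨h, rfl⟩, rfl⟩
  exact ⟨g + h, smul_add n g h⟩

lemma NG_gcd_subset_NG_add_NG {G : Type*} [AddCommGroup G] (m n : ℕ) :
    NG G (Nat.gcd m n) ⊆ NG G m + NG G n := by
  rintro _ ⟨g, rfl⟩
  have bezout : ((Nat.gcd m n : ℕ) : ℤ) = m * Int.gcdA m n + n * Int.gcdB m n := by
    simpa only [Int.gcd_natCast_natCast] using Int.gcd_eq_gcd_ab (m : ℤ) (n : ℤ)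
  refine ⟨m • (Int.gcdA m n • g), ⟨_, rfl⟩, n • (Int.gcdB m n • g), ⟨_, rfl⟩, ?_⟩
  change m • _ + n • _ = _
  rw [← natCast_zsmul, ← natCast_zsmul, ← natCast_zsmul, smul_smul, smul_smul, ← add_smul,
    ← bezout]

lemma add_NG_eq_add_NG_gcd {G : Type*} [AddCommGroup G] {S : Set G} (m n : ℕ)
    (hS : S + NG G n ⊆ S) : S + NG G m = S + NG G (Nat.gcd m n) := by
  refine (Set.add_subset_add_left (NG_subset_NG_of_dvd (Nat.gcd_dvd_left m n))).antisymm ?_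
  calc S + NG G (Nat.gcd m n)
      ⊆ S + (NG G m + NG G n) := Set.add_subset_add_left (NG_gcd_subset_NG_add_NG m n)
    _ = S + NG G n + NG G m := by rw [add_comm (NG G m), add_assoc]
    _ ⊆ S + NG G m := Set.add_subset_add_right hS

lemma sInter_add_subset {G : Type*} [Add G] {F : Set (Set G)} {T : Set G}
    (hF : ∀ S ∈ F, S + T ⊆ S) : ⋂₀ F + T ⊆ ⋂₀ F := by
  rintro _ ⟨x, hx, t, ht, rfl⟩ S hSF
  exact hF S hSF (Set.add_mem_add (hx S hSF) ht)

lemma Gbr_add_NG_subset {G : Type*} [AddCommGroup G] [LinearOrder G] [IsOrderedAddMonoid G]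
    (C : Set G) (n : ℕ) : Gbr C n + NG G n ⊆ Gbr C n := by
  refine sInter_add_subset ?_
  rintro _ ⟨H, -, -, rfl⟩
  rw [add_assoc]
  exact Set.add_subset_add_left (NG_add_NG_subset n)

theorem Gbr_add_NG_eq_gcd_general {G : Type*} [AddCommGroup G] [LinearOrder G] [IsOrderedAddMonoid G]
    (m n : ℕ) (C : Set G) :
    Gbr C n + NG G m = Gbr C n + NG G (Nat.gcd m n) :=
  add_NG_eq_add_NG_gcd m n (Gbr_add_NG_subset C n)

/-- For a convex subgroup `C` and positive `m, n`:
`G^{[n]}_C + mG = G^{[n]}_C + gcd(m,n)G`. -/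
theorem Gbr_add_NG_eq_gcd {G : Type*} [AddCommGroup G] [LinearOrder G] [IsOrderedAddMonoid G]
    (m n : ℕ) (hm : 0 < m) (hn : 0 < n) (C : Set G) (hC : IsConvexSubgroup C) :
    Gbr C n + NG G m = Gbr C n + NG G (Nat.gcd m n) :=
  Gbr_add_NG_eq_gcd_general m n C
end

section
/- Let G be a linearly ordered abelian group and C ⊆ G a convex subgroup. Suppose m = m₁·m₂ ∈ ℕ with m₁, m₂ coprime and n = n₁·n₂ ∈ ℕ with n₁, n₂ coprime. Then: (i) C + mG = (C + m₁G) ∩ (C + m₂G); (ii) G^{[n]}_C + mG = (G^{[n]}_C + m₁G) ∩ (G^{[n]}_C + m₂G); (iii) G^{[n]}_C + mG = (G^{[n₁]}_C + mG) ∩ (G^{[n₂]}_C + mG). -/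
/-! All the sets involved are subgroups of `G` and `A + B` is their join, so everything can be
phrased in the lattice of subgroups. The single arithmetic input is Bézout: if `p, q` are coprime
and `p • x`, `q • x` lie in a subgroup `T`, then so does `x`. For `x ∈ (A + m₁G) ∩ (A + m₂G)`,
multiplying by `m₂` resp. `m₁` lands in `A + m₁m₂G`, which gives (i) and (ii). Part (iii) is the
same argument once one knows `n₂ • G^{[n₁]}_C ⊆ G^{[n₁n₂]}_C`, which holds termwise:
`n₂ • (H + n₁G) ⊆ H + n₁n₂G`. -/

open Pointwise

namespace AddSubgroup

variable {G : Type*} [AddCommGroup G]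

theorem mem_of_nsmul_mem_of_coprime {T : AddSubgroup G} {p q : ℕ} (hpq : p.Coprime q) {x : G}
    (hp : p • x ∈ T) (hq : q • x ∈ T) : x ∈ T := by
  obtain ⟨u, v, huv⟩ := hpq.isCoprime
  have hx : x = u • (p • x) + v • (q • x) := by
    rw [← natCast_zsmul, ← natCast_zsmul, smul_smul, smul_smul, ← add_smul, huv, one_smul]
  rw [hx]
  exact T.add_mem (T.zsmul_mem hp u) (T.zsmul_mem hq v)

theorem inf_le_of_map_nsmul_le {S₁ S₂ T : AddSubgroup G} {p q : ℕ} (hpq : p.Coprime q)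
    (h₁ : S₁.map (nsmulAddMonoidHom q) ≤ T) (h₂ : S₂.map (nsmulAddMonoidHom p) ≤ T) :
    S₁ ⊓ S₂ ≤ T := fun _ hx =>
  mem_of_nsmul_mem_of_coprime hpq (h₂ (mem_map_of_mem _ hx.2)) (h₁ (mem_map_of_mem _ hx.1))

theorem map_nsmul_le (A : AddSubgroup G) (k : ℕ) : A.map (nsmulAddMonoidHom k) ≤ A :=
  map_le_iff_le_comap.mpr fun _ ha => A.nsmul_mem ha k

theorem range_nsmul_mono {d n : ℕ} (h : d ∣ n) :
    (nsmulAddMonoidHom n : G →+ G).range ≤ (nsmulAddMonoidHom d).range := by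
  rintro _ ⟨g, rfl⟩
  obtain ⟨k, rfl⟩ := h
  exact ⟨k • g, by simp [mul_nsmul']⟩

theorem map_nsmul_range_nsmul (k n : ℕ) :
    (nsmulAddMonoidHom n : G →+ G).range.map (nsmulAddMonoidHom k) =
      (nsmulAddMonoidHom (n * k)).range := by
  rw [AddMonoidHom.map_range]
  congr 1
  ext g
  simp [mul_nsmul]

theorem coe_sup_range_nsmul (A : AddSubgroup G) (n : ℕ) :
    ((A ⊔ (nsmulAddMonoidHom n).range : AddSubgroup G) : Set G) = A + NG G n :=
  A.add_normal _

theorem map_nsmul_sup_range_nsmul_le (A : AddSubgroup G) (k n : ℕ) :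
    (A ⊔ (nsmulAddMonoidHom n).range).map (nsmulAddMonoidHom k) ≤
      A ⊔ (nsmulAddMonoidHom (n * k)).range := by
  rw [map_sup, map_nsmul_range_nsmul]
  exact sup_le_sup_right (A.map_nsmul_le k) _

theorem sup_range_nsmul_mul_eq_inf {A : AddSubgroup G} {m₁ m₂ : ℕ} (hm : m₁.Coprime m₂) :
    A ⊔ (nsmulAddMonoidHom (m₁ * m₂)).range =
      (A ⊔ (nsmulAddMonoidHom m₁).range) ⊓ (A ⊔ (nsmulAddMonoidHom m₂).range) := by
  refine le_antisymm (le_inf ?_ ?_) (inf_le_of_map_nsmul_le hm ?_ ?_)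
  · exact sup_le_sup_left (range_nsmul_mono (dvd_mul_right m₁ m₂)) A
  · exact sup_le_sup_left (range_nsmul_mono (dvd_mul_left m₂ m₁)) A
  · exact A.map_nsmul_sup_range_nsmul_le m₂ m₁
  · exact mul_comm m₁ m₂ ▸ A.map_nsmul_sup_range_nsmul_le m₁ m₂

theorem sup_eq_sup_inf_sup {X X₁ X₂ : AddSubgroup G} (K : AddSubgroup G) {n₁ n₂ : ℕ}
    (hn : n₁.Coprime n₂) (hX₁ : X ≤ X₁) (hX₂ : X ≤ X₂)
    (h₁ : X₁.map (nsmulAddMonoidHom n₂) ≤ X) (h₂ : X₂.map (nsmulAddMonoidHom n₁) ≤ X) :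
    X ⊔ K = (X₁ ⊔ K) ⊓ (X₂ ⊔ K) := by
  refine le_antisymm (le_inf (sup_le_sup_right hX₁ K) (sup_le_sup_right hX₂ K))
    (inf_le_of_map_nsmul_le hn ?_ ?_)
  · rw [map_sup]; exact sup_le_sup h₁ (K.map_nsmul_le n₂)
  · rw [map_sup]; exact sup_le_sup h₂ (K.map_nsmul_le n₁)

end AddSubgroup

section Gbr

variable {G : Type*} [AddCommGroup G] [LinearOrder G] [IsOrderedAddMonoid G]

def IsConvexSubgroup.toAddSubgroup {H : Set G} (hH : IsConvexSubgroup H) : AddSubgroup G where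
  carrier := H
  zero_mem' := hH.1
  add_mem' ha hb := hH.2.1 _ ha _ hb
  neg_mem' ha := hH.2.2.1 _ ha

@[simp]
theorem IsConvexSubgroup.coe_toAddSubgroup {H : Set G} (hH : IsConvexSubgroup H) :
    (hH.toAddSubgroup : Set G) = H :=
  rfl

def gbrAddSubgroup (C : Set G) (n : ℕ) : AddSubgroup G :=
  ⨅ (H : Set G) (hH : IsConvexSubgroup H) (_ : C ⊂ H), hH.toAddSubgroup ⊔ (nsmulAddMonoidHom n).range

theorem coe_gbrAddSubgroup (C : Set G) (n : ℕ) : (gbrAddSubgroup C n : Set G) = Gbr C n := by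
  ext x
  simp only [gbrAddSubgroup, SetLike.mem_coe, AddSubgroup.mem_iInf, Gbr, Set.mem_sInter,
    ← SetLike.mem_coe (x := x) (p := _ ⊔ _), AddSubgroup.coe_sup_range_nsmul]
  constructor
  · rintro h _ ⟨H, hH, hCH, rfl⟩
    exact h H hH hCH
  · exact fun h H hH hCH => h _ ⟨H, hH, hCH, rfl⟩

theorem gbrAddSubgroup_mono {C : Set G} {d n : ℕ} (h : d ∣ n) :
    gbrAddSubgroup C n ≤ gbrAddSubgroup C d :=
  iInf₂_mono fun _ _ => iInf_mono fun _ => sup_le_sup_left (AddSubgroup.range_nsmul_mono h) _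

theorem map_nsmul_gbrAddSubgroup_le (C : Set G) (k n : ℕ) :
    (gbrAddSubgroup C n).map (nsmulAddMonoidHom k) ≤ gbrAddSubgroup C (n * k) := by
  refine le_iInf₂ fun H hH => le_iInf fun hCH => ?_
  calc _
      _ ≤ (hH.toAddSubgroup ⊔ (nsmulAddMonoidHom n).range).map (nsmulAddMonoidHom k) :=
        AddSubgroup.map_mono (iInf₂_le_of_le H hH (iInf_le _ hCH))
      _ ≤ _ := hH.toAddSubgroup.map_nsmul_sup_range_nsmul_le k n

end Gbr

theorem Gbr_add_NG_factorize_general {G : Type*} [AddCommGroup G] [LinearOrder G] [IsOrderedAddMonoid G]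
    (C : Set G) (hC : IsConvexSubgroup C) (m₁ m₂ n₁ n₂ : ℕ)
    (hm : Nat.Coprime m₁ m₂) (hn : Nat.Coprime n₁ n₂) :
    C + NG G (m₁ * m₂) = (C + NG G m₁) ∩ (C + NG G m₂) ∧
    Gbr C (n₁ * n₂) + NG G (m₁ * m₂) =
      (Gbr C (n₁ * n₂) + NG G m₁) ∩ (Gbr C (n₁ * n₂) + NG G m₂) ∧
    Gbr C (n₁ * n₂) + NG G (m₁ * m₂) =
      (Gbr C n₁ + NG G (m₁ * m₂)) ∩ (Gbr C n₂ + NG G (m₁ * m₂)) := by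
  have hI := hC.toAddSubgroup.sup_range_nsmul_mul_eq_inf hm
  have hII := (gbrAddSubgroup C (n₁ * n₂)).sup_range_nsmul_mul_eq_inf hm
  have hIII := AddSubgroup.sup_eq_sup_inf_sup (nsmulAddMonoidHom (m₁ * m₂)).range hn
    (gbrAddSubgroup_mono (dvd_mul_right n₁ n₂)) (gbrAddSubgroup_mono (dvd_mul_left n₂ n₁))
    (map_nsmul_gbrAddSubgroup_le C n₂ n₁) (mul_comm n₂ n₁ ▸ map_nsmul_gbrAddSubgroup_le C n₁ n₂)
  simp only [← SetLike.coe_set_eq, AddSubgroup.coe_inf, AddSubgroup.coe_sup_range_nsmul,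
    IsConvexSubgroup.coe_toAddSubgroup, coe_gbrAddSubgroup] at hI hII hIII
  exact ⟨hI, hII, hIII⟩

/-- For a convex subgroup `C`, `m = m₁·m₂` with `m₁, m₂` coprime, and
`n = n₁·n₂` with `n₁, n₂` coprime:
(i) `C + mG = (C + m₁G) ∩ (C + m₂G)`;
(ii) `G^{[n]}_C + mG = (G^{[n]}_C + m₁G) ∩ (G^{[n]}_C + m₂G)`;
(iii) `G^{[n]}_C + mG = (G^{[n₁]}_C + mG) ∩ (G^{[n₂]}_C + mG)`. -/
theorem Gbr_add_NG_factorize {G : Type*} [AddCommGroup G] [LinearOrder G] [IsOrderedAddMonoid G]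
    (C : Set G) (hC : IsConvexSubgroup C) (m₁ m₂ n₁ n₂ : ℕ)
    (hm₁ : 0 < m₁) (hm₂ : 0 < m₂) (hn₁ : 0 < n₁) (hn₂ : 0 < n₂)
    (hm : Nat.Coprime m₁ m₂) (hn : Nat.Coprime n₁ n₂) :
    C + NG G (m₁ * m₂) = (C + NG G m₁) ∩ (C + NG G m₂) ∧
    Gbr C (n₁ * n₂) + NG G (m₁ * m₂) =
      (Gbr C (n₁ * n₂) + NG G m₁) ∩ (Gbr C (n₁ * n₂) + NG G m₂) ∧
    Gbr C (n₁ * n₂) + NG G (m₁ * m₂) =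
      (Gbr C n₁ + NG G (m₁ * m₂)) ∩ (Gbr C n₂ + NG G (m₁ * m₂)) :=
  Gbr_add_NG_factorize_general C hC m₁ m₂ n₁ n₂ hm hn
end
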